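/- Let I be a good ideal in K[x_1,…,x_n] and let a_1,…,a_n and b_1,…,b_n be nonnegative integers with a_i ≤ b_i for all i. Then I_{a_1,…,a_n} ⊆ I_{b_1,…,b_n}. -/

import Mathlib

/-!
Shifting a generator `α` of `I ^ (|a| + 1)` in the box `a` by `μ^{b - a}` gives a monomial
`α*` of `I ^ (|b| + 1)` in the box `b`, and it suffices to find a minimal generator of
`I ^ (|b| + 1)` in the box `b` below `α*`, since its quotient by `μ^b` divides `α / μ^a`.
Take a monomial `β ≤ α*` of `I ^ (|b| + 1)` that is minimal among those above `μ^b`. If `β`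
touches the upper face `xₚ = (bₚ + 1) dₚ` of the box, it is the corner `μ^{b + eₚ}`; goodness
forces every monomial of `I ^ L` on or above the simplex `∑ⱼ tⱼ / dⱼ = L`, and the corner lies
on it, so it is a minimal generator. Otherwise a smaller generator would lie in a box `c ≤ b`
with `c ≠ b`, contradicting `|c| = |b|`.
-/

open MvPolynomial

namespace GasanovaRR

/-- The monomial `x^α` in `K[x_1,…,x_n]`. -/
noncomputable def mono (K : Type*) [Field K] {n : ℕ} (α : Fin n → ℕ) :
    MvPolynomial (Fin n) K :=
  MvPolynomial.monomial (Finsupp.equivFunOnFinite.symm α) 1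

/-- `I` is a monomial ideal: it is generated by a set of monomials. -/
def IsMonomialIdeal {K : Type*} [Field K] {n : ℕ}
    (I : Ideal (MvPolynomial (Fin n) K)) : Prop :=
  ∃ A : Set (Fin n → ℕ), I = Ideal.span (mono K '' A)

/-- `x^α` is a minimal monomial generator of `I`, i.e. `x^α ∈ G(I)`:
`x^α ∈ I` and no monomial in `I` strictly divides it. -/
def IsMinGen {K : Type*} [Field K] {n : ℕ}
    (I : Ideal (MvPolynomial (Fin n) K)) (α : Fin n → ℕ) : Prop :=
  mono K α ∈ I ∧ ∀ β : Fin n → ℕ, mono K β ∈ I → β ≤ α → β = α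

/-- The point `α` lies in the box `B_{a_1,…,a_n}` (for box sizes `d_1,…,d_n`). -/
def InBox {n : ℕ} (d a α : Fin n → ℕ) : Prop :=
  ∀ i, a i * d i ≤ α i ∧ α i ≤ (a i + 1) * d i

/-- `I` is a good ideal (w.r.t. box sizes `d`): for every `l ≥ 1`, every minimal
generator of `I^l` lies in a box whose coordinate sum is `l - 1`. -/
def IsGood {K : Type*} [Field K] {n : ℕ}
    (I : Ideal (MvPolynomial (Fin n) K)) (d : Fin n → ℕ) : Prop :=
  ∀ l : ℕ, 1 ≤ l → ∀ α : Fin n → ℕ, IsMinGen (I ^ l) α →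
    ∃ a : Fin n → ℕ, InBox d a α ∧ ∑ i, a i = l - 1

/-- `I` is an `𝔪`-primary monomial ideal whose minimal generating set contains
`μ_i = x_i^{d_i}` with `d_i > 0` for each `i`. -/
def MPrimaryWithCorners {K : Type*} [Field K] {n : ℕ}
    (I : Ideal (MvPolynomial (Fin n) K)) (d : Fin n → ℕ) : Prop :=
  IsMonomialIdeal I ∧ I ≠ ⊤ ∧ (∀ i, 0 < d i) ∧ ∀ i, IsMinGen I (Pi.single i (d i))

/-- The ideal `I_{a_1,…,a_n}` associated to the box `B_{a_1,…,a_n}`, generated by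
`m / (μ_1^{a_1}⋯μ_n^{a_n})` for `m ∈ B_{a_1,…,a_n} ∩ G(I^l)`, `l = a_1+⋯+a_n+1`. -/
noncomputable def boxIdeal {K : Type*} [Field K] {n : ℕ}
    (I : Ideal (MvPolynomial (Fin n) K)) (d a : Fin n → ℕ) :
    Ideal (MvPolynomial (Fin n) K) :=
  Ideal.span ((fun α => mono K (α - fun i => a i * d i)) ''
    {α | InBox d a α ∧ IsMinGen (I ^ (∑ i, a i + 1)) α})

/-- The Ratliff–Rush closure `Ĩ = ⋃_{k ≥ 0} (I^{k+1} : I^k)`. -/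
noncomputable def ratliffRush {K : Type*} [Field K] {n : ℕ}
    (I : Ideal (MvPolynomial (Fin n) K)) : Ideal (MvPolynomial (Fin n) K) :=
  ⨆ k : ℕ, (I ^ (k + 1)).colon ((I ^ k : Ideal (MvPolynomial (Fin n) K)) : Set (MvPolynomial (Fin n) K))

/-- The cone in `ℕ^n` with set `S` of fixed coordinates and vertex `v`. -/
def Cone {n : ℕ} (S : Set (Fin n)) (v : Fin n → ℕ) : Set (Fin n → ℕ) :=
  {b | (∀ i ∈ S, b i = v i) ∧ ∀ i ∉ S, v i ≤ b i}

/-- `I` is a very good ideal: it is good and `I_{a_1,…,a_n} = I` for all boxes. -/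
def IsVeryGood {K : Type*} [Field K] {n : ℕ}
    (I : Ideal (MvPolynomial (Fin n) K)) (d : Fin n → ℕ) : Prop :=
  IsGood I d ∧ ∀ a : Fin n → ℕ, boxIdeal I d a = I

section

variable {K : Type*} [Field K] {n : ℕ}

lemma mono_eq_prod (x : Fin n → ℕ) : mono K x = ∏ i, X i ^ x i := by
  rw [mono, monomial_eq, C_1, one_mul, Finsupp.prod_fintype _ _ (fun _ => pow_zero _)]
  rfl

lemma mono_zero : mono K (0 : Fin n → ℕ) = 1 := by
  simp [mono_eq_prod]

lemma mono_add (x y : Fin n → ℕ) : mono K (x + y) = mono K x * mono K y := by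
  simp [mono_eq_prod, pow_add, Finset.prod_mul_distrib]

lemma mono_nsmul (m : ℕ) (x : Fin n → ℕ) : mono K (m • x) = mono K x ^ m := by
  simp [mono_eq_prod, ← Finset.prod_pow, ← pow_mul, mul_comm]

lemma mono_mul_eq_prod (k d : Fin n → ℕ) :
    mono K (k * d) = ∏ i, mono K (Pi.single i (d i)) ^ k i := by
  simp [mono_eq_prod, Pi.single_apply, ← pow_mul, mul_comm]

lemma mono_mem_of_le {J : Ideal (MvPolynomial (Fin n) K)} {x y : Fin n → ℕ}
    (hx : mono K x ∈ J) (hxy : x ≤ y) : mono K y ∈ J := by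
  rw [← add_tsub_cancel_of_le hxy, mono_add]
  exact J.mul_mem_right _ hx

lemma isMinGen_iff_minimal {J : Ideal (MvPolynomial (Fin n) K)} {α : Fin n → ℕ} :
    IsMinGen J α ↔ Minimal (fun β => mono K β ∈ J) α :=
  and_congr_right' ⟨fun h _ hβ hle => (h _ hβ hle).ge,
    fun h _ hβ hle => le_antisymm hle (h hβ hle)⟩

lemma exists_isMinGen_le {J : Ideal (MvPolynomial (Fin n) K)} {σ : Fin n → ℕ}
    (hσ : mono K σ ∈ J) : ∃ δ ≤ σ, IsMinGen J δ := by
  simpa only [isMinGen_iff_minimal] using exists_minimal_le_of_wellFoundedLT _ σ hσ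

/-- `∑ⱼ tⱼ / dⱼ`, scaled by `∏ᵢ dᵢ` to stay in `ℕ`. -/
def weight (d t : Fin n → ℕ) : ℕ := ∑ j, t j * ((∏ i, d i) / d j)

lemma weight_mono (d : Fin n → ℕ) : Monotone (weight d) :=
  fun _ _ h => Finset.sum_le_sum fun j _ => Nat.mul_le_mul_right _ (h j)

lemma weight_strictMono {d : Fin n → ℕ} (hd : ∀ i, 0 < d i) : StrictMono (weight d) := by
  intro x y hxy
  obtain ⟨hle, j, hj⟩ := Pi.lt_def.mp hxy
  have hpos : 0 < (∏ i, d i) / d j :=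
    Nat.div_pos (Nat.le_of_dvd (Finset.prod_pos fun i _ => hd i)
      (Finset.dvd_prod_of_mem d (Finset.mem_univ j))) (hd j)
  exact Finset.sum_lt_sum (fun i _ => Nat.mul_le_mul_right _ (hle i))
    ⟨j, Finset.mem_univ j, Nat.mul_lt_mul_of_pos_right hj hpos⟩

lemma weight_nsmul (d t : Fin n → ℕ) (m : ℕ) : weight d (m • t) = m * weight d t := by
  simp only [weight, Finset.mul_sum, Pi.smul_apply, smul_eq_mul, mul_assoc]

lemma weight_mul (c d : Fin n → ℕ) : weight d (c * d) = (∑ i, c i) * ∏ i, d i := by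
  simp only [weight, Finset.sum_mul, Pi.mul_apply, mul_assoc,
    Nat.mul_div_cancel' (Finset.dvd_prod_of_mem d (Finset.mem_univ _))]

section GoodIdeal

variable {I : Ideal (MvPolynomial (Fin n) K)} {d : Fin n → ℕ}

lemma mem_pow_add_mul_of_mem (hμ : ∀ i, mono K (Pi.single i (d i)) ∈ I) {s : ℕ}
    {x : Fin n → ℕ} (hx : mono K x ∈ I ^ s) (k : Fin n → ℕ) :
    mono K (x + k * d) ∈ I ^ (s + ∑ i, k i) := by
  rw [mono_add, pow_add, mono_mul_eq_prod, ← Finset.prod_pow_eq_pow_sum]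
  exact Ideal.mul_mem_mul hx (Ideal.prod_mem_prod fun i _ => Ideal.pow_mem_pow (hμ i) _)

lemma mul_prod_le_weight_of_mem_pow (hgood : IsGood I d) {L : ℕ} {σ : Fin n → ℕ}
    (hσ : mono K σ ∈ I ^ L) :
    L * ∏ i, d i ≤ weight d σ := by
  set D := ∏ i, d i
  obtain _ | L := L
  · simp
  have hpow : mono K ((D + 1) • σ) ∈ I ^ ((L + 1) * (D + 1)) := by
    rw [mono_nsmul, pow_mul]
    exact Ideal.pow_mem_pow hσ _
  -- A generator below `(D + 1) • σ` lies in a box of index sum `(L + 1) (D + 1) - 1`;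
  -- dividing by `D + 1 > D` absorbs the `- 1`.
  obtain ⟨δ, hδσ, hδ⟩ := exists_isMinGen_le hpow
  obtain ⟨c, hc, hcsum⟩ := hgood _ (Nat.one_le_iff_ne_zero.mpr (by positivity)) δ hδ
  have hscaled : ((L + 1) * (D + 1) - 1) * D ≤ (D + 1) * weight d σ := by
    rw [← hcsum, ← weight_mul, ← weight_nsmul]
    exact weight_mono d fun i => (hc i).1.trans (hδσ i)
  have hsub : (L + 1) * (D + 1) - 1 = L * (D + 1) + D := by
    rw [add_one_mul]; omega
  rw [hsub] at hscaled
  nlinarith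

lemma InBox.add_mul {a α : Fin n → ℕ} (h : InBox d a α) (k : Fin n → ℕ) :
    InBox d (a + k) (α + k * d) := fun i => by
  simp only [Pi.add_apply, Pi.mul_apply]
  constructor <;> nlinarith [h i]

lemma isMinGen_pow_corner (hd : ∀ i, 0 < d i) (hμ : ∀ i, mono K (Pi.single i (d i)) ∈ I)
    (hgood : IsGood I d) (g : Fin n → ℕ) (p : Fin n) :
    IsMinGen (I ^ (∑ i, g i + 1)) ((g + Pi.single p 1) * d) := by
  have hsum : ∑ i, (g + Pi.single p 1 : Fin n → ℕ) i = ∑ i, g i + 1 := by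
    simp [Finset.sum_add_distrib]
  refine ⟨?_, fun β hβ hle => ?_⟩
  · have := mem_pow_add_mul_of_mem hμ (s := 0) (x := 0) (by simp [mono_zero]) (g + Pi.single p 1)
    rwa [zero_add, zero_add, hsum] at this
  · by_contra hne
    have hlt := weight_strictMono hd (lt_of_le_of_ne hle hne)
    rw [weight_mul, hsum] at hlt
    exact hlt.not_ge (mul_prod_le_weight_of_mem_pow hgood hβ)

lemma isMinGen_pow_of_minimal_of_lt (hgood : IsGood I d) {g γ : Fin n → ℕ}
    (hmin : Minimal (fun σ => g * d ≤ σ ∧ mono K σ ∈ I ^ (∑ i, g i + 1)) γ)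
    (hlt : ∀ j, γ j < (g j + 1) * d j) :
    IsMinGen (I ^ (∑ i, g i + 1)) γ := by
  refine ⟨hmin.prop.2, fun β hβ hβγ => ?_⟩
  by_contra hne
  obtain ⟨m, hm⟩ := (Pi.lt_def.mp (lt_of_le_of_ne hβγ hne)).2
  obtain ⟨δ, hδβ, hδ⟩ := exists_isMinGen_le hβ
  have hjoin : γ ≤ δ ⊔ g * d :=
    hmin.2 ⟨le_sup_right, mono_mem_of_le hδ.1 le_sup_left⟩
      (sup_le (hδβ.trans hβγ) hmin.prop.1)
  have hγm : γ m ≤ g m * d m := by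
    have := hjoin m
    have := hδβ m
    simp only [Pi.sup_apply, Pi.mul_apply] at *
    omega
  obtain ⟨c, hc, hcsum⟩ := hgood _ le_add_self δ hδ
  have hcg : ∀ j, c j ≤ g j := fun j => Nat.lt_succ_iff.mp <| Nat.lt_of_mul_lt_mul_right <|
    (hc j).1.trans_lt ((hδβ.trans hβγ) j |>.trans_lt (hlt j))
  have hcm : c m < g m := Nat.lt_of_mul_lt_mul_right <|
    (hc m).1.trans_lt ((hδβ m).trans_lt hm |>.trans_le hγm)
  have := Finset.sum_lt_sum (fun i _ => hcg i) ⟨m, Finset.mem_univ m, hcm⟩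
  omega

theorem exists_isMinGen_inBox_le (hd : ∀ i, 0 < d i)
    (hμ : ∀ i, mono K (Pi.single i (d i)) ∈ I) (hgood : IsGood I d) {g γ : Fin n → ℕ}
    (hγ : mono K γ ∈ I ^ (∑ i, g i + 1)) (hbox : InBox d g γ) :
    ∃ β ≤ γ, InBox d g β ∧ IsMinGen (I ^ (∑ i, g i + 1)) β := by
  obtain ⟨β, hβγ, hmin⟩ := exists_minimal_le_of_wellFoundedLT
    (fun σ => g * d ≤ σ ∧ mono K σ ∈ I ^ (∑ i, g i + 1)) γ ⟨fun i => (hbox i).1, hγ⟩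
  have hβbox : InBox d g β := fun i => ⟨hmin.prop.1 i, (hβγ i).trans (hbox i).2⟩
  refine ⟨β, hβγ, hβbox, ?_⟩
  by_cases hcorner : ∃ p, β p = (g p + 1) * d p
  · obtain ⟨p, hp⟩ := hcorner
    have hcp := isMinGen_pow_corner hd hμ hgood g p
    have hle : (g + Pi.single p 1) * d ≤ β := fun j => by
      rcases eq_or_ne j p with rfl | hj
      · simp [hp]
      · simpa [hj] using hβbox j |>.1
    have hge : g * d ≤ (g + Pi.single p 1) * d :=
      fun j => Nat.mul_le_mul_right _ (Nat.le_add_right _ _)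
    rwa [le_antisymm (hmin.2 ⟨hge, hcp.1⟩ hle) hle]
  · simp only [not_exists] at hcorner
    exact isMinGen_pow_of_minimal_of_lt hgood hmin fun j =>
      (hβbox j).2.lt_of_ne (hcorner j)

end GoodIdeal

end

/-- Corollary 4.5: for a good ideal `I`, if `a_i ≤ b_i` for all `i`, then
`I_{a_1,…,a_n} ⊆ I_{b_1,…,b_n}`. -/
theorem boxIdeal_mono {K : Type*} [Field K] {n : ℕ}
    (I : Ideal (MvPolynomial (Fin n) K)) (d : Fin n → ℕ)
    (hI : MPrimaryWithCorners I d) (hgood : IsGood I d)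
    (a b : Fin n → ℕ) (hab : a ≤ b) :
    boxIdeal I d a ≤ boxIdeal I d b := by
  obtain ⟨-, -, hd, hcorner⟩ := hI
  have hμ : ∀ i, mono K (Pi.single i (d i)) ∈ I := fun i => (hcorner i).1
  obtain ⟨k, rfl⟩ := exists_add_of_le hab
  rw [boxIdeal, Ideal.span_le]
  rintro _ ⟨α, ⟨hbox, hα⟩, rfl⟩
  have hshift := mem_pow_add_mul_of_mem hμ hα.1 k
  rw [add_right_comm, ← Finset.sum_add_distrib] at hshift
  obtain ⟨β, hβα, hβbox, hβ⟩ :=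
    exists_isMinGen_inBox_le hd hμ hgood hshift (hbox.add_mul k)
  refine mono_mem_of_le (Ideal.subset_span ⟨β, ⟨hβbox, hβ⟩, rfl⟩) fun i => ?_
  have hβ_le := hβα i
  have hβ_ge := (hβbox i).1
  have hα_ge := (hbox i).1
  simp only [Pi.sub_apply, Pi.add_apply, Pi.mul_apply, add_mul] at *
  omega

end GasanovaRR
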